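/- Let g(n,3,ℓ) denote the minimum number of edges of a graph G of order n with λ_3(G) = ℓ. Then g(n,3,n−2) = C(n,2) − 1 for n ≥ 3. -/

import Mathlib

open SimpleGraph

/-- An `S`-Steiner tree in `G`: a subgraph of `G` that is a tree whose
vertex set contains `S`. -/
def SimpleGraph.IsSteinerTree {V : Type*} (G : SimpleGraph V) (S : Set V)
    (T : G.Subgraph) : Prop :=
  S ⊆ T.verts ∧ T.coe.IsTree

/-- The generalized local edge-connectivity `λ(S)`: the maximum number of
pairwise edge-disjoint `S`-Steiner trees in `G`. -/
noncomputable def SimpleGraph.steinerLambda {V : Type*} (G : SimpleGraph V)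
    (S : Set V) : ℕ :=
  sSup {n | ∃ T : Fin n → G.Subgraph, (∀ i, G.IsSteinerTree S (T i)) ∧
    ∀ i j, i ≠ j → Disjoint (T i).edgeSet (T j).edgeSet}

/-- The generalized `k`-edge-connectivity `λ_k(G)`:
the minimum of `λ(S)` over all `k`-element vertex subsets `S`. -/
noncomputable def SimpleGraph.genEdgeConn {V : Type*} (G : SimpleGraph V)
    (k : ℕ) : ℕ :=
  sInf {m | ∃ S : Set V, S.ncard = k ∧ G.steinerLambda S = m}

/-!
Every tree containing `S` uses an edge at each vertex of `S`, so `λ(S)` is at most the degree of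
any vertex of `S`. For `K_n` minus an edge `pq` this gives `λ(S) ≤ n - 2` when `p ∈ S`, and
`λ(S) ≥ n - 2` for every 3-set `S`: one or two short paths inside `S ∪ {q}`, together with the
stars joining the remaining vertices to `S`, are edge-disjoint connected subgraphs containing `S`.
If two edges `uv`, `xy` are missing, then either some vertex misses two edges and has degree at
most `n - 3`, or `ux` is an edge; in `n - 2` edge-disjoint trees for `{u, v, x}` every tree
then has exactly one edge at `u` and one at `x`, so the tree through `ux` cannot reach `v`.
-/

theorem Set.exists_eq_insert_pair_of_ncard_eq_three {α : Type*} {S : Set α} (hS : S.ncard = 3)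
    {a : α} (ha : a ∈ S) : ∃ b c, a ≠ b ∧ a ≠ c ∧ b ≠ c ∧ S = {a, b, c} := by
  obtain ⟨b, c, hbc, h⟩ := Set.ncard_eq_two.1 (by rw [Set.ncard_sdiff_singleton_of_mem ha, hS])
  have hb : b ∈ S \ {a} := h ▸ Set.mem_insert b {c}
  have hc : c ∈ S \ {a} := h ▸ Set.mem_insert_of_mem b rfl
  exact ⟨b, c, Ne.symm hb.2, Ne.symm hc.2, hbc, by
    rw [← h, Set.insert_sdiff_singleton, Set.insert_eq_of_mem ha]⟩

namespace SimpleGraph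

variable {V : Type*} {G : SimpleGraph V}

theorem Reachable.mem_of_forall_adj_mem {C : Set V} (hC : ∀ a ∈ C, ∀ b, G.Adj a b → b ∈ C)
    {u v : V} (h : G.Reachable u v) (hu : u ∈ C) : v ∈ C := by
  obtain ⟨p⟩ := h
  induction p with
  | nil => exact hu
  | cons hadj _ ih => exact ih (hC _ hu _ hadj)

theorem ncard_neighborSet_add_ncard_le [Finite V] {u : V} {s : Set V}
    (hs : ∀ x ∈ s, ¬ G.Adj u x) : (G.neighborSet u).ncard + s.ncard ≤ Nat.card V := by
  rw [← Set.ncard_add_ncard_compl s, add_comm s.ncard]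
  exact Nat.add_le_add_right (Set.ncard_le_ncard fun x hx hxs ↦ hs x hxs hx) _

theorem ncard_edgeSet_add_ncard_edgeSet_compl [Fintype V] (G : SimpleGraph V) :
    G.edgeSet.ncard + Gᶜ.edgeSet.ncard = (Fintype.card V).choose 2 := by
  classical
  rw [← Set.ncard_union_eq (disjoint_edgeSet.2 disjoint_compl_right), ← edgeSet_sup,
    sup_compl_eq_top, ← coe_edgeFinset, Set.ncard_coe_finset,
    card_edgeFinset_top_eq_card_choose_two]

theorem ncard_edgeSet_compl_edge [Fintype V] {p q : V} (hpq : p ≠ q) :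
    (edge p q)ᶜ.edgeSet.ncard = (Fintype.card V).choose 2 - 1 := by
  have := (edge p q)ᶜ.ncard_edgeSet_add_ncard_edgeSet_compl
  rw [compl_compl, edgeSet_edge_of_ne hpq, Set.ncard_singleton] at this
  omega

def IsSteinerPacking (G : SimpleGraph V) (S : Set V) {k : ℕ} (T : Fin k → G.Subgraph) : Prop :=
  (∀ i, G.IsSteinerTree S (T i)) ∧ Pairwise fun i j ↦ Disjoint (T i).edgeSet (T j).edgeSet

theorem steinerLambda_eq_sSup (S : Set V) :
    G.steinerLambda S = sSup {k | ∃ T : Fin k → G.Subgraph, G.IsSteinerPacking S T} := rfl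

theorem IsSteinerTree.exists_adj {S : Set V} {T : G.Subgraph} (hT : G.IsSteinerTree S T)
    {u w : V} (hu : u ∈ S) (hw : w ∈ S) (huw : u ≠ w) : ∃ z, T.Adj u z := by
  obtain ⟨p⟩ := hT.2.connected.preconnected ⟨u, hT.1 hu⟩ ⟨w, hT.1 hw⟩
  cases p with
  | nil => exact absurd rfl huw
  | cons h _ => exact ⟨_, h⟩

theorem Subgraph.Connected.exists_isSteinerTree_le {H : G.Subgraph} (hH : H.Connected)
    {S : Set V} (hS : S ⊆ H.verts) : ∃ T ≤ H, G.IsSteinerTree S T := by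
  obtain ⟨T, hle, hT⟩ := hH.coe.exists_isTree_le
  let T' : G.Subgraph :=
    { verts := H.verts
      Adj a b := ∃ (ha : a ∈ H.verts) (hb : b ∈ H.verts), T.Adj ⟨a, ha⟩ ⟨b, hb⟩
      adj_sub := fun ⟨_, _, h⟩ ↦ H.adj_sub (hle h)
      edge_vert := fun ⟨ha, _, _⟩ ↦ ha
      symm := ⟨fun _ _ ⟨ha, hb, h⟩ ↦ ⟨hb, ha, h.symm⟩⟩ }
  have hcoe : T'.coe = T := by
    ext a b
    exact ⟨fun ⟨_, _, h⟩ ↦ h, fun h ↦ ⟨a.2, b.2, h⟩⟩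
  exact ⟨T', ⟨le_rfl, fun _ _ ⟨_, _, h⟩ ↦ hle h⟩, hS, hcoe ▸ hT⟩

namespace IsSteinerPacking

variable {S : Set V} {k : ℕ} {T : Fin k → G.Subgraph}

theorem eq_of_adj (hT : G.IsSteinerPacking S T) {i j : Fin k} {x y : V}
    (hi : (T i).Adj x y) (hj : (T j).Adj x y) : i = j :=
  by_contra fun hij ↦ Set.disjoint_left.1 (hT.2 hij) (Subgraph.mem_edgeSet.2 hi)
    (Subgraph.mem_edgeSet.2 hj)

theorem exists_injective_adj (hT : G.IsSteinerPacking S T) (hS : S.Nontrivial) {u : V}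
    (hu : u ∈ S) : ∃ a : Fin k → V, Function.Injective a ∧ ∀ i, (T i).Adj u (a i) := by
  obtain ⟨w, hw, hwu⟩ := hS.exists_ne u
  choose a ha using fun i ↦ (hT.1 i).exists_adj hu hw hwu.symm
  refine ⟨a, fun i j hij ↦ hT.eq_of_adj (ha i) ?_, ha⟩
  rw [hij]
  exact ha j

theorem le_ncard_neighborSet [Finite V] (hT : G.IsSteinerPacking S T) (hS : S.Nontrivial)
    {u : V} (hu : u ∈ S) : k ≤ (G.neighborSet u).ncard := by
  obtain ⟨a, ha_inj, ha⟩ := hT.exists_injective_adj hS hu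
  calc k = (Set.range a).ncard := by rw [Set.ncard_range_of_injective ha_inj, Nat.card_fin]
    _ ≤ (G.neighborSet u).ncard :=
      Set.ncard_le_ncard (Set.range_subset_iff.2 fun i ↦ (T i).adj_sub (ha i))

theorem exists_neighborSet_eq_singleton [Finite V] (hT : G.IsSteinerPacking S T)
    (hS : S.Nontrivial) {u z : V} (hu : u ∈ S) (hdeg : (G.neighborSet u).ncard ≤ k)
    (hz : G.Adj u z) : ∃ i, (T i).neighborSet u = {z} := by
  obtain ⟨a, ha_inj, ha⟩ := hT.exists_injective_adj hS hu
  have hrange : Set.range a = G.neighborSet u :=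
    Set.eq_of_subset_of_ncard_le (Set.range_subset_iff.2 fun i ↦ (T i).adj_sub (ha i))
      (by rwa [Set.ncard_range_of_injective ha_inj, Nat.card_fin])
  have hunique : ∀ i y, (T i).Adj u y → y = a i := by
    intro i y h
    obtain ⟨j, rfl⟩ : y ∈ Set.range a := hrange ▸ (T i).adj_sub h
    rw [hT.eq_of_adj h (ha j)]
  obtain ⟨i, rfl⟩ : z ∈ Set.range a := hrange ▸ hz
  exact ⟨i, Set.eq_singleton_iff_unique_mem.2 ⟨ha i, hunique i⟩⟩

end IsSteinerPacking

theorem genEdgeConn_le_steinerLambda {k : ℕ} {S : Set V} (hS : S.ncard = k) :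
    G.genEdgeConn k ≤ G.steinerLambda S :=
  Nat.sInf_le ⟨S, hS, rfl⟩

theorem le_genEdgeConn_iff {k m : ℕ} (hk : k ≤ Nat.card V) :
    m ≤ G.genEdgeConn k ↔ ∀ S : Set V, S.ncard = k → m ≤ G.steinerLambda S := by
  refine ⟨fun h S hS ↦ h.trans (genEdgeConn_le_steinerLambda hS), fun h ↦ le_csInf ?_ ?_⟩
  · obtain ⟨S, -, hS⟩ :=
      Set.exists_subset_card_eq (s := Set.univ) (n := k) (by rwa [Set.ncard_univ])
    exact ⟨_, S, hS, rfl⟩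
  · rintro _ ⟨S, hS, rfl⟩
    exact h S hS

section Finite

variable [Finite V] {S : Set V}

theorem bddAbove_isSteinerPacking (hS : S.Nontrivial) :
    BddAbove {k | ∃ T : Fin k → G.Subgraph, G.IsSteinerPacking S T} :=
  ⟨_, fun _ ⟨_, hT⟩ ↦ hT.le_ncard_neighborSet hS hS.nonempty.some_mem⟩

theorem steinerLambda_le_ncard_neighborSet (hS : S.Nontrivial) {u : V} (hu : u ∈ S) :
    G.steinerLambda S ≤ (G.neighborSet u).ncard := by
  rw [steinerLambda_eq_sSup]
  exact csSup_le' fun _ ⟨_, hT⟩ ↦ hT.le_ncard_neighborSet hS hu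

theorem IsSteinerPacking.le_steinerLambda {k : ℕ} {T : Fin k → G.Subgraph}
    (hT : G.IsSteinerPacking S T) (hS : S.Nontrivial) : k ≤ G.steinerLambda S := by
  rw [steinerLambda_eq_sSup]
  exact le_csSup (bddAbove_isSteinerPacking hS) ⟨T, hT⟩

theorem exists_isSteinerPacking_of_le_steinerLambda (hS : S.Nontrivial) {k : ℕ}
    (hk : k ≤ G.steinerLambda S) : ∃ T : Fin k → G.Subgraph, G.IsSteinerPacking S T := by
  rw [steinerLambda_eq_sSup] at hk
  obtain ⟨T, hT⟩ :=
    Nat.sSup_mem (s := {k | ∃ T : Fin k → G.Subgraph, G.IsSteinerPacking S T})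
    ⟨0, Fin.elim0, fun i ↦ i.elim0, fun i ↦ i.elim0⟩ (bddAbove_isSteinerPacking hS)
  exact ⟨fun i ↦ T (Fin.castLE hk i), fun i ↦ hT.1 _,
    fun i j hij ↦ hT.2 fun h ↦ hij (Fin.castLE_injective hk h)⟩

theorem card_le_steinerLambda_of_connected (hS : S.Nontrivial) {ι : Type*} [Fintype ι]
    (H : ι → G.Subgraph) (hconn : ∀ i, (H i).Connected) (hSH : ∀ i, S ⊆ (H i).verts)
    (hdisj : Pairwise fun i j ↦ Disjoint (H i).edgeSet (H j).edgeSet) :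
    Fintype.card ι ≤ G.steinerLambda S := by
  choose T hTH hT using fun i ↦ (hconn i).exists_isSteinerTree_le (hSH i)
  let e := (Fintype.equivFin ι).symm
  refine IsSteinerPacking.le_steinerLambda (T := T ∘ e)
    ⟨fun i ↦ hT _, fun i j hij ↦ ?_⟩ hS
  exact (hdisj (e.injective.ne hij)).mono (Subgraph.edgeSet_mono (hTH _))
    (Subgraph.edgeSet_mono (hTH _))

end Finite

section Fintype

variable [Fintype V]

theorem steinerLambda_add_three_le_of_not_adj_of_not_adj {u v w : V} (huv : u ≠ v)
    (huw : u ≠ w) (hvw : v ≠ w) (hv : ¬ G.Adj u v) (hw : ¬ G.Adj u w) :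
    G.steinerLambda {u, v, w} + 3 ≤ Fintype.card V := by
  have hS : ({u, v, w} : Set V).ncard = 3 := Set.ncard_eq_three.2 ⟨u, v, w, huv, huw, hvw, rfl⟩
  have hdeg := ncard_neighborSet_add_ncard_le (G := G) (u := u) (s := {u, v, w}) (by
    rintro x (rfl | rfl | rfl)
    exacts [G.irrefl, hv, hw])
  have hlam := steinerLambda_le_ncard_neighborSet (G := G) ⟨u, by simp, v, by simp, huv⟩
    (Set.mem_insert u {v, w})
  rw [Nat.card_eq_fintype_card] at hdeg
  omega

theorem steinerLambda_add_three_le_of_adj {u v x y : V} (huv : u ≠ v) (hvx : v ≠ x)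
    (hxy : x ≠ y) (hv : ¬ G.Adj u v) (hy : ¬ G.Adj x y) (hux : G.Adj u x) :
    G.steinerLambda {u, v, x} + 3 ≤ Fintype.card V := by
  set S : Set V := {u, v, x}
  have hS : S.Nontrivial := ⟨u, by simp [S], v, by simp [S], huv⟩
  have hdeg {a b : V} (hab : a ≠ b) (hb : ¬ G.Adj a b) :
      (G.neighborSet a).ncard ≤ Fintype.card V - 2 := by
    have := ncard_neighborSet_add_ncard_le (G := G) (u := a) (s := {a, b}) (by
      rintro z (rfl | rfl)
      exacts [G.irrefl, hb])
    rw [Set.ncard_pair hab, Nat.card_eq_fintype_card] at this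
    omega
  by_contra! hlt
  obtain ⟨T, hT⟩ := exists_isSteinerPacking_of_le_steinerLambda (G := G) hS
    (k := Fintype.card V - 2) (by omega)
  obtain ⟨i, hi⟩ := hT.exists_neighborSet_eq_singleton hS (by simp [S]) (hdeg huv hv) hux
  obtain ⟨j, hj⟩ := hT.exists_neighborSet_eq_singleton hS (by simp [S]) (hdeg hxy hy) hux.symm
  have hux_i : (T i).Adj u x := by simp [← Subgraph.mem_neighborSet, hi]
  have hxu_j : (T j).Adj x u := by simp [← Subgraph.mem_neighborSet, hj]
  obtain rfl : i = j := hT.eq_of_adj hux_i hxu_j.symm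
  have hclosed : ∀ a ∈ {a : (T i).verts | (a : V) = u ∨ (a : V) = x}, ∀ b,
      (T i).coe.Adj a b → (b : V) = u ∨ (b : V) = x := by
    rintro a (ha | ha) b hab
    · have : (b : V) ∈ (T i).neighborSet u := ha ▸ hab
      exact Or.inr (by simpa [hi] using this)
    · have : (b : V) ∈ (T i).neighborSet x := ha ▸ hab
      exact Or.inl (by simpa [hj] using this)
  have hreach := (hT.1 i).2.connected.preconnected ⟨u, (hT.1 i).1 (by simp [S])⟩
    ⟨v, (hT.1 i).1 (by simp [S])⟩
  rcases hreach.mem_of_forall_adj_mem hclosed (Or.inl rfl) with h | h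
  exacts [huv h.symm, hvx h]

theorem subsingleton_edgeSet_compl
    (hG : ∀ S : Set V, S.ncard = 3 → Fintype.card V - 2 ≤ G.steinerLambda S) :
    Gᶜ.edgeSet.Subsingleton := by
  have hshare {u v w : V} (hvw : v ≠ w) (huv : Gᶜ.Adj u v) (huw : Gᶜ.Adj u w) : False := by
    have := steinerLambda_add_three_le_of_not_adj_of_not_adj huv.1 huw.1 hvw huv.2 huw.2
    have := hG _ (Set.ncard_eq_three.2 ⟨u, v, w, huv.1, huw.1, hvw, rfl⟩)
    omega
  have hdisj {u v x y : V} (huv : Gᶜ.Adj u v) (hxy : Gᶜ.Adj x y) (hux : u ≠ x)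
      (hvx : v ≠ x) : False := by
    by_cases hadj : G.Adj u x
    · have := steinerLambda_add_three_le_of_adj huv.1 hvx hxy.1 huv.2 hxy.2 hadj
      have := hG _ (Set.ncard_eq_three.2 ⟨u, v, x, huv.1, hux, hvx, rfl⟩)
      omega
    · exact hshare hvx huv ⟨hux, hadj⟩
  rintro ⟨u, v⟩ huv ⟨x, y⟩ hxy
  rw [mem_edgeSet] at huv hxy
  rcases eq_or_ne u x with rfl | hux
  · by_contra hne
    exact hshare (fun hvy ↦ hne (by rw [hvy])) huv hxy
  rcases eq_or_ne v x with rfl | hvx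
  · by_contra hne
    exact hshare (fun huy ↦ hne (by rw [huy]; exact Sym2.eq_swap)) huv.symm hxy
  exact (hdisj huv hxy hux hvx).elim

theorem choose_two_sub_one_le_ncard_edgeSet
    (hG : ∀ S : Set V, S.ncard = 3 → Fintype.card V - 2 ≤ G.steinerLambda S) :
    (Fintype.card V).choose 2 - 1 ≤ G.edgeSet.ncard := by
  have := G.ncard_edgeSet_add_ncard_edgeSet_compl
  have := Set.ncard_le_one_iff_subsingleton.2 (subsingleton_edgeSet_compl hG)
  omega

end Fintype

/-- The walk `a w b w c`; its edges form the star at `w` with leaves `a`, `b`, `c`. -/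
def starWalk {w a b c : V} (ha : G.Adj w a) (hb : G.Adj w b) (hc : G.Adj w c) : G.Walk a c :=
  .cons ha.symm (.cons hb (.cons hb.symm (.cons hc .nil)))

theorem disjoint_edgeSet_starWalk {w a b c : V} (ha : G.Adj w a) (hb : G.Adj w b)
    (hc : G.Adj w c) {K : G.Subgraph} (hw : w ∉ K.verts) :
    Disjoint (starWalk ha hb hc).toSubgraph.edgeSet K.edgeSet := by
  refine Set.disjoint_left.2 fun e he heK ↦ hw (K.mem_verts_of_mem_edge heK ?_)
  simp only [starWalk, Walk.edgeSet_toSubgraph, Walk.mem_edgeSet, Walk.edges_cons,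
    Walk.edges_nil, List.mem_cons, List.not_mem_nil, or_false] at he
  rcases he with rfl | rfl | rfl | rfl <;> simp

section Construction

variable [Fintype V] [DecidableEq V]

/-- A packing of connected subgraphs spanning at most `T` extends by the stars centred at the
vertices outside `T`. -/
theorem card_add_card_compl_le_steinerLambda {a b c : V} (hab : a ≠ b) {T : Finset V}
    (hT : {a, b, c} ⊆ T) (hout : ∀ w ∉ T, G.Adj w a ∧ G.Adj w b ∧ G.Adj w c)
    {ι : Type*} [Fintype ι] (K : ι → G.Subgraph) (hK : ∀ i, (K i).Connected)
    (hKS : ∀ i, {a, b, c} ⊆ (K i).verts) (hKT : ∀ i, (K i).verts ⊆ T)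
    (hKdisj : Pairwise fun i j ↦ Disjoint (K i).edgeSet (K j).edgeSet) :
    Fintype.card ι + Tᶜ.card ≤ G.steinerLambda {a, b, c} := by
  have hout' (w : ↥Tᶜ) : (w : V) ∉ T := Finset.mem_compl.1 w.2
  let star (w : ↥Tᶜ) : G.Subgraph :=
    (starWalk (hout w (hout' w)).1 (hout w (hout' w)).2.1 (hout w (hout' w)).2.2).toSubgraph
  have hstar (w : ↥Tᶜ) {L : G.Subgraph} (hL : (w : V) ∉ L.verts) :
      Disjoint (star w).edgeSet L.edgeSet :=
    disjoint_edgeSet_starWalk _ _ _ hL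
  rw [← Fintype.card_coe Tᶜ, ← Fintype.card_sum]
  refine card_le_steinerLambda_of_connected ⟨a, by simp, b, by simp, hab⟩ (Sum.elim K star)
    (fun i ↦ ?_) (fun i ↦ ?_) ?_
  · cases i
    exacts [hK _, Walk.toSubgraph_connected _]
  · cases i
    · exact hKS _
    · simp [star, starWalk, Set.insert_subset_iff]
  · rintro (i | w) (j | w') hne
    · exact hKdisj fun h ↦ hne (congrArg _ h)
    · exact (hstar w' fun h ↦ hout' w' (hKT i h)).symm
    · exact hstar w fun h ↦ hout' w (hKT j h)
    · refine hstar w ?_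
      have hww' : (w : V) ≠ w' := fun h ↦ hne (congrArg _ (Subtype.ext h))
      have habc : (w : V) ∉ ({a, b, c} : Finset V) := fun h ↦ hout' w (hT h)
      simp only [Finset.mem_insert, Finset.mem_singleton, not_or] at habc
      simp [star, starWalk, hww', habc]

theorem card_sub_two_le_steinerLambda_of_path {a b c : V} (hab : G.Adj a b) (hbc : G.Adj b c)
    (hout : ∀ w ∉ ({a, b, c} : Finset V), G.Adj w a ∧ G.Adj w b ∧ G.Adj w c) :
    Fintype.card V - 2 ≤ G.steinerLambda {a, b, c} := by
  have := card_add_card_compl_le_steinerLambda hab.ne subset_rfl hout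
    (fun _ : Unit ↦ (Walk.cons hab (Walk.cons hbc .nil)).toSubgraph)
    (fun _ ↦ Walk.toSubgraph_connected _) (fun _ ↦ by simp [Set.insert_subset_iff])
    (fun _ ↦ by simp [Set.insert_subset_iff]) Subsingleton.pairwise
  have := Finset.card_le_three (a := a) (b := b) (c := c)
  rw [Finset.card_compl, Fintype.card_unit] at *
  omega

theorem card_sub_two_le_steinerLambda_of_two_paths {a b c d : V} (had : a ≠ d)
    (hab : G.Adj a b) (hbc : G.Adj b c) (hbd : G.Adj b d) (hdc : G.Adj d c) (hca : G.Adj c a)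
    (hout : ∀ w ∉ ({a, b, c, d} : Finset V), G.Adj w a ∧ G.Adj w b ∧ G.Adj w c) :
    Fintype.card V - 2 ≤ G.steinerLambda {a, b, c} := by
  have := card_add_card_compl_le_steinerLambda hab.ne (by simp [Finset.insert_subset_iff]) hout
    (fun i : Bool ↦ cond i (Walk.cons hab (Walk.cons hbc .nil)).toSubgraph
      (Walk.cons hbd (Walk.cons hdc (Walk.cons hca .nil))).toSubgraph)
    (fun i ↦ by cases i <;> exact Walk.toSubgraph_connected _)
    (fun i ↦ by cases i <;> simp [Set.insert_subset_iff])
    (fun i ↦ by cases i <;> simp [Set.insert_subset_iff])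
    (by
      have := hab.ne; have := hbc.ne; have := hbd.ne; have := hdc.ne; have := hca.ne
      rintro (_ | _) (_ | _) hne <;> simp [Set.disjoint_left] at hne ⊢ <;> grind)
  have := Finset.card_le_four (a := a) (b := b) (c := c) (d := d)
  rw [Finset.card_compl, Fintype.card_bool] at *
  omega

theorem card_sub_two_le_steinerLambda_compl_edge_of_mem {p q : V} {S : Set V}
    (hS : S.ncard = 3) (hp : p ∈ S) : Fintype.card V - 2 ≤ (edge p q)ᶜ.steinerLambda S := by
  obtain ⟨b, c, hpb, hpc, hbc, rfl⟩ := Set.exists_eq_insert_pair_of_ncard_eq_three hS hp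
  clear hS hp
  wlog hqb : q ≠ b generalizing b c
  · rw [Set.pair_comm]
    exact this c b hpc hpb hbc.symm fun hqc ↦ hbc ((not_not.1 hqb).symm.trans hqc)
  by_cases hq : q = p ∨ q = c
  · refine card_sub_two_le_steinerLambda_of_path ?_ ?_ fun w hw ↦ ⟨?_, ?_, ?_⟩ <;>
      simp only [compl_adj, edge_adj] <;> grind
  · refine card_sub_two_le_steinerLambda_of_two_paths (d := q) (by grind) ?_ ?_ ?_ ?_ ?_
      fun w hw ↦ ⟨?_, ?_, ?_⟩ <;> simp only [compl_adj, edge_adj] <;> grind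

theorem card_sub_two_le_steinerLambda_compl_edge (p q : V) {S : Set V} (hS : S.ncard = 3) :
    Fintype.card V - 2 ≤ (edge p q)ᶜ.steinerLambda S := by
  by_cases hp : p ∈ S
  · exact card_sub_two_le_steinerLambda_compl_edge_of_mem hS hp
  by_cases hq : q ∈ S
  · rw [edge_comm]
    exact card_sub_two_le_steinerLambda_compl_edge_of_mem hS hq
  obtain ⟨a, b, c, hab, hac, hbc, rfl⟩ := Set.ncard_eq_three.1 hS
  refine card_sub_two_le_steinerLambda_of_path ?_ ?_ fun w hw ↦ ⟨?_, ?_, ?_⟩ <;>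
    simp only [compl_adj, edge_adj] <;> grind

theorem genEdgeConn_compl_edge {p q : V} (hpq : p ≠ q) (hV : 3 ≤ Fintype.card V) :
    (edge p q)ᶜ.genEdgeConn 3 = Fintype.card V - 2 := by
  obtain ⟨S, hpqS, -, hS⟩ := Set.exists_subsuperset_card_eq (n := 3) (Set.subset_univ {p, q})
    (by rw [Set.ncard_pair hpq]; omega) (by rwa [Set.ncard_univ, Nat.card_eq_fintype_card])
  refine le_antisymm ?_ ((le_genEdgeConn_iff (by rwa [Nat.card_eq_fintype_card])).2
    fun S hS ↦ card_sub_two_le_steinerLambda_compl_edge p q hS)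
  have hdeg := ncard_neighborSet_add_ncard_le (G := (edge p q)ᶜ) (u := p) (s := {p, q}) (by
    rintro x (rfl | rfl) <;> simp [edge_adj])
  rw [Set.ncard_pair hpq, Nat.card_eq_fintype_card] at hdeg
  calc (edge p q)ᶜ.genEdgeConn 3
      ≤ (edge p q)ᶜ.steinerLambda S := genEdgeConn_le_steinerLambda hS
    _ ≤ ((edge p q)ᶜ.neighborSet p).ncard :=
      steinerLambda_le_ncard_neighborSet (Set.one_lt_ncard_iff_nontrivial.1 (by omega))
        (hpqS (Set.mem_insert p {q}))
    _ ≤ Fintype.card V - 2 := by omega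

end Construction

end SimpleGraph

theorem min_edges_lambda_three_eq_n_sub_two (n : ℕ) (hn : 3 ≤ n) :
    IsLeast {m : ℕ | ∃ G : SimpleGraph (Fin n),
        G.genEdgeConn 3 = n - 2 ∧ G.edgeSet.ncard = m}
      (n.choose 2 - 1) := by
  have hV : 3 ≤ Fintype.card (Fin n) := by rwa [Fintype.card_fin]
  let p : Fin n := ⟨0, by omega⟩
  let q : Fin n := ⟨1, by omega⟩
  have hpq : p ≠ q := by simp [p, q]
  refine ⟨⟨(edge p q)ᶜ, ?_, ?_⟩, ?_⟩
  · simpa using genEdgeConn_compl_edge hpq hV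
  · simpa using ncard_edgeSet_compl_edge hpq
  · rintro _ ⟨G, hG, rfl⟩
    have hlam := (le_genEdgeConn_iff (G := G) (m := Fintype.card (Fin n) - 2)
      (by simpa using hV)).1 (by simp [hG])
    simpa using choose_two_sub_one_le_ncard_edgeSet hlam
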